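/- arXiv:2208.01586 — 2 statements merged into one kernel-verified Lean document; each statement's English description precedes it below -/
import Mathlib

section
/- Let β > 0 and let X_ε be the unique solution of X(X − 1 − β²ε)² = β²ε²/2 with X > 1 + β²ε. Then X_ε = 1 + (1/√2)(√2·β + 1)βε + o(ε) as ε → 0⁺; that is, (X_ε − 1)/ε → (1/√2)(√2·β + 1)β. -/
open Filter

/-- First-order asymptotics of `X_ε`: `(X_ε − 1)/ε → (1/√2)(√2β + 1)β` as
`ε → 0⁺`. -/
theorem stmt_8 (β : ℝ) (hβ : 0 < β) (X : ℝ → ℝ)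
    (hX : ∀ ε : ℝ, 0 < ε → X ε > 1 + β ^ 2 * ε ∧
      X ε * (X ε - 1 - β ^ 2 * ε) ^ 2 = β ^ 2 * ε ^ 2 / 2) :
    Tendsto (fun ε : ℝ => (X ε - 1) / ε)
      (nhdsWithin 0 (Set.Ioi 0))
      (nhds ((1 / Real.sqrt 2) * (Real.sqrt 2 * β + 1) * β)) := by
  -- key identity: for ε > 0, X ε - 1 - β²ε = βε / √(2 X ε)
  have key : ∀ ε : ℝ, 0 < ε → X ε - 1 - β ^ 2 * ε = β * ε / Real.sqrt (2 * X ε) := by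
    intro ε hε
    obtain ⟨h1, h2⟩ := hX ε hε
    have hx1 : (1:ℝ) < X ε := lt_trans (by nlinarith [mul_pos (pow_pos hβ 2) hε]) h1
    have hx0 : 0 < X ε := by linarith
    have hd : (X ε - 1 - β ^ 2 * ε) ^ 2 = (β * ε) ^ 2 / (2 * X ε) := by
      field_simp
      nlinarith [h2]
    have hpos : 0 < X ε - 1 - β ^ 2 * ε := by linarith [h1]
    have := congrArg Real.sqrt hd
    rw [Real.sqrt_sq hpos.le, Real.sqrt_div (by positivity) ] at this
    rw [this, Real.sqrt_sq (by positivity)]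
  have hXt : Tendsto X (nhdsWithin 0 (Set.Ioi 0)) (nhds 1) := by
    have lower : ∀ᶠ ε in nhdsWithin (0:ℝ) (Set.Ioi 0), (1:ℝ) ≤ X ε := by
      filter_upwards [self_mem_nhdsWithin] with ε hε
      have hε' : 0 < ε := hε
      have := (hX ε hε').1
      nlinarith [mul_pos (pow_pos hβ 2) hε']
    have upper : ∀ᶠ ε in nhdsWithin (0:ℝ) (Set.Ioi 0), X ε ≤ 1 + ε * (β ^ 2 + β) := by
      filter_upwards [self_mem_nhdsWithin] with ε hε
      have hε' : 0 < ε := hε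
      have hk := key ε hε'
      have hx1 : (1:ℝ) < X ε := lt_trans (by nlinarith [mul_pos (pow_pos hβ 2) hε']) (hX ε hε').1
      have hs : (1:ℝ) ≤ Real.sqrt (2 * X ε) := by
        rw [show (1:ℝ) = Real.sqrt 1 by simp]
        exact Real.sqrt_le_sqrt (by linarith)
      have : β * ε / Real.sqrt (2 * X ε) ≤ β * ε :=
        div_le_self (by positivity) hs
      nlinarith [hk]
    have hup : Tendsto (fun ε : ℝ => 1 + ε * (β ^ 2 + β)) (nhdsWithin 0 (Set.Ioi 0)) (nhds 1) := by
      have : Tendsto (fun ε : ℝ => 1 + ε * (β ^ 2 + β)) (nhds 0) (nhds (1 + 0 * (β ^ 2 + β))) := by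
        exact (continuous_const.add (continuous_id.mul continuous_const)).tendsto 0
      simpa using this.mono_left nhdsWithin_le_nhds
    exact tendsto_of_tendsto_of_tendsto_of_le_of_le' tendsto_const_nhds hup lower upper
  have hg : ContinuousAt (fun x : ℝ => β ^ 2 + β / Real.sqrt (2 * x)) 1 := by
    apply ContinuousAt.add continuousAt_const
    apply ContinuousAt.div continuousAt_const
    · exact (Real.continuous_sqrt.comp (continuous_const.mul continuous_id)).continuousAt
    · have : (0:ℝ) < Real.sqrt (2 * 1) := Real.sqrt_pos.mpr (by norm_num)
      exact this.ne'
  have hcomp : Tendsto (fun ε : ℝ => β ^ 2 + β / Real.sqrt (2 * X ε))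
      (nhdsWithin 0 (Set.Ioi 0)) (nhds (β ^ 2 + β / Real.sqrt (2 * 1))) :=
    (hg.tendsto).comp hXt
  have heq : (fun ε : ℝ => (X ε - 1) / ε) =ᶠ[nhdsWithin 0 (Set.Ioi 0)]
      (fun ε : ℝ => β ^ 2 + β / Real.sqrt (2 * X ε)) := by
    filter_upwards [self_mem_nhdsWithin] with ε hε
    have hε0 : 0 < ε := hε
    have hk := key ε hε0
    have h3 : X ε - 1 = (β ^ 2 + β / Real.sqrt (2 * X ε)) * ε := by
      rw [add_mul, div_mul_eq_mul_div]
      linarith [hk]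
    rw [h3, mul_div_cancel_right₀ _ (ne_of_gt hε0)]
  have hval : β ^ 2 + β / Real.sqrt (2 * 1) = 1 / Real.sqrt 2 * (Real.sqrt 2 * β + 1) * β := by
    have h2 : Real.sqrt 2 ≠ 0 := (Real.sqrt_pos.mpr (by norm_num)).ne'
    have hs : Real.sqrt 2 * Real.sqrt 2 = 2 := Real.mul_self_sqrt (by norm_num)
    rw [mul_one]
    field_simp
  exact Tendsto.congr' heq.symm (hval ▸ hcomp)
end

section
/- Let n, m : Ω → ℝ² be weakly differentiable with (n(x), m(x)) an orthonormal basis of ℝ² a.e., and let u = (u₁, u₂) : Ω → ℝ² be weakly differentiable. Define M := u₁n + u₂m. Then for each k ∈ {1,2}, almost everywhere: |∂ₖM|² = |∂ₖu|² + 2(u₁∂ₖu₂ − u₂∂ₖu₁)(m·∂ₖn) + |u|²|∂ₖn|². -/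
/-!
Differentiating the orthonormality relations `⟪n, n⟫ = ⟪m, m⟫ = 1`, `⟪n, m⟫ = 0` shows that
`∂ₖn ⊥ n`, `∂ₖm ⊥ m` and `⟪n, ∂ₖm⟫ = -⟪m, ∂ₖn⟫`. In the plane this forces `∂ₖn = c m` and
`∂ₖm = -c n` with `c = ⟪m, ∂ₖn⟫`, so by the product rule
`∂ₖM = (∂ₖu₁ - c u₂) n + (∂ₖu₂ + c u₁) m`, and expanding its squared length in the orthonormal
frame `(n, m)` gives the identity, since `|∂ₖn|² = c²`.
-/

open scoped RealInnerProductSpace Topology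
open Filter Module

section

variable {E F : Type*} [NormedAddCommGroup E] [InnerProductSpace ℝ E]
  [NormedAddCommGroup F] [NormedSpace ℝ F]

theorem inner_fderiv_add_inner_fderiv_eq_zero {f g : F → E} {x : F}
    (hf : DifferentiableAt ℝ f x) (hg : DifferentiableAt ℝ g x)
    (hfg : (fun y => ⟪f y, g y⟫) =ᶠ[𝓝 x] fun _ => ⟪f x, g x⟫) (v : F) :
    ⟪f x, fderiv ℝ g x v⟫ + ⟪fderiv ℝ f x v, g x⟫ = 0 := by
  rw [← fderiv_inner_apply ℝ hf hg, hfg.fderiv_eq, fderiv_const_apply, zero_apply]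

theorem orthonormal_pair_iff {n m : E} :
    Orthonormal ℝ ![n, m] ↔ ⟪n, n⟫ = 1 ∧ ⟪m, m⟫ = 1 ∧ ⟪n, m⟫ = 0 := by
  have h_norm : ∀ v : E, ‖v‖ = 1 ∨ ‖v‖ = -1 ↔ ‖v‖ = 1 := fun v =>
    or_iff_left (by linarith [norm_nonneg v])
  simp only [orthonormal_vecCons_iff]
  simp [real_inner_comm m n, h_norm]
  tauto

theorem Orthonormal.norm_smul_add_smul_sq {n m : E} (hnm : Orthonormal ℝ ![n, m]) (a b : ℝ) :
    ‖a • n + b • m‖ ^ 2 = a ^ 2 + b ^ 2 := by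
  obtain ⟨hnn, hmm, hnm⟩ := orthonormal_pair_iff.mp hnm
  rw [← real_inner_self_eq_norm_sq]
  simp only [inner_add_left, inner_add_right, real_inner_smul_left, real_inner_smul_right,
    hnn, hmm, hnm, real_inner_comm n m]
  ring

theorem Orthonormal.eq_inner_smul_add_inner_smul (h2 : finrank ℝ E = 2) {n m : E}
    (hnm : Orthonormal ℝ ![n, m]) (v : E) : v = ⟪n, v⟫ • n + ⟪m, v⟫ • m := by
  let b := (basisOfOrthonormalOfCardEqFinrank hnm (by simp [h2])).toOrthonormalBasis
    (by rwa [coe_basisOfOrthonormalOfCardEqFinrank])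
  have hb : ⇑b = ![n, m] := by simp [b]
  simpa [hb, Fin.sum_univ_two] using (b.sum_repr' v).symm

theorem fderiv_apply_eq_of_orthonormal_frame (h2 : finrank ℝ E = 2) {n m : F → E} {x : F}
    (hn : DifferentiableAt ℝ n x) (hm : DifferentiableAt ℝ m x)
    (hframe : ∀ᶠ y in 𝓝 x, Orthonormal ℝ ![n y, m y]) (v : F) :
    fderiv ℝ n x v = ⟪m x, fderiv ℝ n x v⟫ • m x ∧
      fderiv ℝ m x v = -⟪m x, fderiv ℝ n x v⟫ • n x := by
  have hx := orthonormal_pair_iff.mp hframe.self_of_nhds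
  have hconst (f g : F → E) (hfg : ∀ y, Orthonormal ℝ ![n y, m y] → ⟪f y, g y⟫ = ⟪f x, g x⟫) :
      (fun y => ⟪f y, g y⟫) =ᶠ[𝓝 x] fun _ => ⟪f x, g x⟫ := by
    filter_upwards [hframe] with y hy using hfg y hy
  have hn_n := inner_fderiv_add_inner_fderiv_eq_zero hn hn
    (hconst n n fun y hy => by rw [(orthonormal_pair_iff.mp hy).1, hx.1]) v
  have hm_m := inner_fderiv_add_inner_fderiv_eq_zero hm hm
    (hconst m m fun y hy => by rw [(orthonormal_pair_iff.mp hy).2.1, hx.2.1]) v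
  have hn_m := inner_fderiv_add_inner_fderiv_eq_zero hn hm
    (hconst n m fun y hy => by rw [(orthonormal_pair_iff.mp hy).2.2, hx.2.2]) v
  rw [real_inner_comm (n x)] at hn_n
  rw [real_inner_comm (m x)] at hm_m hn_m
  have hdecomp := hframe.self_of_nhds.eq_inner_smul_add_inner_smul h2
  constructor
  · have h := hdecomp (fderiv ℝ n x v)
    rwa [show ⟪n x, fderiv ℝ n x v⟫ = 0 by linarith, zero_smul, zero_add] at h
  · have h := hdecomp (fderiv ℝ m x v)
    rwa [show ⟪m x, fderiv ℝ m x v⟫ = 0 by linarith,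
      show ⟪n x, fderiv ℝ m x v⟫ = -⟪m x, fderiv ℝ n x v⟫ by linarith, zero_smul, add_zero] at h

theorem fderiv_smul_add_smul_apply {u₁ u₂ : F → ℝ} {n m : F → E} {x : F}
    (hu₁ : DifferentiableAt ℝ u₁ x) (hu₂ : DifferentiableAt ℝ u₂ x)
    (hn : DifferentiableAt ℝ n x) (hm : DifferentiableAt ℝ m x) (v : F) :
    fderiv ℝ (fun y => u₁ y • n y + u₂ y • m y) x v =
      fderiv ℝ u₁ x v • n x + u₁ x • fderiv ℝ n x v +
        (fderiv ℝ u₂ x v • m x + u₂ x • fderiv ℝ m x v) := by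
  rw [fderiv_fun_add (f := fun y => u₁ y • n y) (g := fun y => u₂ y • m y) (hu₁.smul hn)
    (hu₂.smul hm), fderiv_fun_smul hu₁ hn, fderiv_fun_smul hu₂ hm]
  simp only [add_apply, smul_apply, ContinuousLinearMap.smulRight_apply]
  abel

end

/-- Change-of-variables identity for the gradient in the moving frame `(n, m)`:
with `M = u₁ n + u₂ m`,
`|∂ₖM|² = |∂ₖu|² + 2(u₁∂ₖu₂ − u₂∂ₖu₁)(m·∂ₖn) + |u|²|∂ₖn|²`. -/
theorem stmt_13 (Ω : Set (EuclideanSpace ℝ (Fin 2))) (hΩ : IsOpen Ω)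
    (n m : EuclideanSpace ℝ (Fin 2) → EuclideanSpace ℝ (Fin 2))
    (u₁ u₂ : EuclideanSpace ℝ (Fin 2) → ℝ)
    (hn : ∀ x ∈ Ω, DifferentiableAt ℝ n x)
    (hm : ∀ x ∈ Ω, DifferentiableAt ℝ m x)
    (hu₁ : ∀ x ∈ Ω, DifferentiableAt ℝ u₁ x)
    (hu₂ : ∀ x ∈ Ω, DifferentiableAt ℝ u₂ x)
    (hnn : ∀ x ∈ Ω, ⟪n x, n x⟫ = (1:ℝ))
    (hmm : ∀ x ∈ Ω, ⟪m x, m x⟫ = (1:ℝ))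
    (hnm : ∀ x ∈ Ω, ⟪n x, m x⟫ = (0:ℝ)) :
    ∀ x ∈ Ω, ∀ k : Fin 2,
      ‖fderiv ℝ (fun y => u₁ y • n y + u₂ y • m y) x
          (EuclideanSpace.single k 1)‖ ^ 2
        = (fderiv ℝ u₁ x (EuclideanSpace.single k 1)) ^ 2
          + (fderiv ℝ u₂ x (EuclideanSpace.single k 1)) ^ 2
          + 2 * (u₁ x * fderiv ℝ u₂ x (EuclideanSpace.single k 1)
                 - u₂ x * fderiv ℝ u₁ x (EuclideanSpace.single k 1))
              * ⟪m x, fderiv ℝ n x (EuclideanSpace.single k 1)⟫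
          + ((u₁ x) ^ 2 + (u₂ x) ^ 2)
              * ‖fderiv ℝ n x (EuclideanSpace.single k 1)‖ ^ 2 := by
  intro x hx k
  set v : EuclideanSpace ℝ (Fin 2) := EuclideanSpace.single k 1
  have hframe : ∀ᶠ y in 𝓝 x, Orthonormal ℝ ![n y, m y] := by
    filter_upwards [hΩ.mem_nhds hx] with y hy
    exact orthonormal_pair_iff.mpr ⟨hnn y hy, hmm y hy, hnm y hy⟩
  obtain ⟨hn', hm'⟩ :=
    fderiv_apply_eq_of_orthonormal_frame finrank_euclideanSpace_fin (hn x hx) (hm x hx) hframe v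
  set c := ⟪m x, fderiv ℝ n x v⟫
  have hON := hframe.self_of_nhds
  calc ‖fderiv ℝ (fun y => u₁ y • n y + u₂ y • m y) x v‖ ^ 2
      = ‖(fderiv ℝ u₁ x v - u₂ x * c) • n x + (fderiv ℝ u₂ x v + u₁ x * c) • m x‖ ^ 2 := by
        rw [fderiv_smul_add_smul_apply (hu₁ x hx) (hu₂ x hx) (hn x hx) (hm x hx), hn', hm']
        congr 2
        module
    _ = _ := by
        have hm_norm : ‖m x‖ = 1 := by simpa using hON.norm_eq_one 1
        rw [hON.norm_smul_add_smul_sq, hn', norm_smul, hm_norm, mul_one, Real.norm_eq_abs, sq_abs]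
        ring
end
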